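/- Let (xₙ)₀≤n≤N be a finite sequence of states in a type X equipped with two measures h : X → ℕ (heat) and s : X → ℕ (structure heat), and let S be a natural number. Suppose each step n → n+1 is of one of two kinds: a 'computation' step, where h(xₙ) > h(xₙ₊₁) and s(xₙ₊₁) ≤ s(xₙ) + S; or a 'structure' step, where h(xₙ) ≥ h(xₙ₊₁) and s(xₙ) > s(xₙ₊₁). Suppose s(x₀) = 0. Then the number k of computation steps satisfies k ≤ h(x₀), the number l of structure steps satisfies l ≤ h(x₀)·S, and hence N = k + l ≤ h(x₀)·(1 + S). -/
import Mathlib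


theorem reduction_length_bound {X : Type*} (h s : X → ℕ) (S N : ℕ)
    (x : ℕ → X) (kind : ℕ → Bool)
    (hstep : ∀ n < N,
      if kind n then h (x n) > h (x (n + 1)) ∧ s (x (n + 1)) ≤ s (x n) + S
      else h (x n) ≥ h (x (n + 1)) ∧ s (x n) > s (x (n + 1)))
    (hs0 : s (x 0) = 0) :
    ((Finset.range N).filter (fun n => kind n)).card ≤ h (x 0) ∧
    ((Finset.range N).filter (fun n => ¬ kind n)).card ≤ h (x 0) * S ∧
    N ≤ h (x 0) * (1 + S) := by
  have key : ∀ n, n ≤ N →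
      ((Finset.range n).filter (fun m => kind m)).card + h (x n) ≤ h (x 0) ∧
      ((Finset.range n).filter (fun m => ¬ kind m)).card + s (x n) ≤
        S * ((Finset.range n).filter (fun m => kind m)).card := by
    intro n
    induction n with
    | zero => simp [hs0]
    | succ n ih =>
      intro hn
      obtain ⟨A, B⟩ := ih (Nat.le_of_succ_le hn)
      have hst := hstep n (Nat.lt_of_succ_le hn)
      have hni1 : n ∉ (Finset.range n).filter (fun m => kind m) := by simp
      have hni2 : n ∉ (Finset.range n).filter (fun m => ¬ kind m) := by simp
      rw [Finset.range_add_one, Finset.filter_insert, Finset.filter_insert]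
      by_cases hk : kind n
      · rw [if_pos hk, if_neg (by simp [hk]), Finset.card_insert_of_notMem hni1]
        rw [if_pos hk] at hst
        have hm : S * (((Finset.range n).filter (fun m => kind m)).card + 1)
            = S * ((Finset.range n).filter (fun m => kind m)).card + S := by ring
        omega
      · rw [if_neg (by simp [hk]), if_pos (by simp [hk]),
          Finset.card_insert_of_notMem hni2]
        rw [if_neg hk] at hst
        omega
  obtain ⟨A, B⟩ := key N le_rfl
  have hk : ((Finset.range N).filter (fun m => kind m)).card ≤ h (x 0) := by omega
  have hl : ((Finset.range N).filter (fun m => ¬ kind m)).card ≤ h (x 0) * S := by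
    have h1 : S * ((Finset.range N).filter (fun m => kind m)).card ≤ S * h (x 0) :=
      Nat.mul_le_mul_left S hk
    have h2 : S * h (x 0) = h (x 0) * S := Nat.mul_comm _ _
    omega
  refine ⟨hk, hl, ?_⟩
  have hcard : ((Finset.range N).filter (fun m => kind m)).card +
      ((Finset.range N).filter (fun m => ¬ kind m)).card = N := by
    rw [Finset.card_filter_add_card_filter_not, Finset.card_range]
  have hh : h (x 0) * (1 + S) = h (x 0) + h (x 0) * S := by ring
  omega
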